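/- arXiv:0910.0208 — 2 statements merged into one kernel-verified Lean document; each statement's English description precedes it below -/
import Mathlib

section
/- Assume q^2 ≠ 1. Then in O_q(G(2,4)) one has [23][14] − q[24][13] + q^2[12][34] ≠ 0. Consequently, there is no K-algebra automorphism of O_q(G(2,4)) sending each quantum minor [ij] to [(i+1)(j+1)] with indices read modulo 4 (i.e., cycling the column indices does not induce an automorphism of the quantum grassmannian). -/
/-!
Both claims come down to non-vanishing in `O_q(M_{2,4})`, which a representation detects.
Sending `X_{03}` and `X_{10}` to zero respects the defining relations, and the other generators
can be realised in the quantum torus on six generators `t_{ij}` as in Cauchon's deleting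
derivation: `X_{01} ↦ t_{01} + t_{02} t_{12}⁻¹ t_{11}` and `X_{ij} ↦ t_{ij}` otherwise. The
quantum torus acts on functions `ℤ⁶ → K` by the twisted shifts `f ↦ (v ↦ q ^ (w ⬝ v) f (v - u))`.

By the quantum Plücker relation the element of the first claim is `q²(q² - 1)[23][01]`;
accordingly its image, applied to the delta function at `0`, takes the value `q²(q² - 1)` at
`(1, 0, 1, 1, 0, 1)`. A column-cycling automorphism would carry `[01][23] = q²[23][01]` to
`[12][03] = q²[03][12]`; since `[12]` and `[03]` commute, `(q² - 1)[03][12] = 0`, whereas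
`[03][12]` has a nonzero image.
-/

open scoped BigOperators

namespace QG

variable (K : Type*) [Field K]

/-- The defining relations of the quantum matrix algebra `O_q(M_{m,n})`. -/
inductive QMatRel (q : K) (m n : ℕ) :
    FreeAlgebra K (Fin m × Fin n) → FreeAlgebra K (Fin m × Fin n) → Prop
  | row : ∀ (i : Fin m) (j l : Fin n), j < l →
      QMatRel q m n (FreeAlgebra.ι K (i, j) * FreeAlgebra.ι K (i, l))
        (q • (FreeAlgebra.ι K (i, l) * FreeAlgebra.ι K (i, j)))
  | col : ∀ (i k : Fin m) (j : Fin n), i < k →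
      QMatRel q m n (FreeAlgebra.ι K (i, j) * FreeAlgebra.ι K (k, j))
        (q • (FreeAlgebra.ι K (k, j) * FreeAlgebra.ι K (i, j)))
  | comm : ∀ (i k : Fin m) (j l : Fin n), k < i → j < l →
      QMatRel q m n (FreeAlgebra.ι K (i, j) * FreeAlgebra.ι K (k, l))
        (FreeAlgebra.ι K (k, l) * FreeAlgebra.ι K (i, j))
  | qrel : ∀ (i k : Fin m) (j l : Fin n), i < k → j < l →
      QMatRel q m n
        (FreeAlgebra.ι K (i, j) * FreeAlgebra.ι K (k, l) -
          FreeAlgebra.ι K (k, l) * FreeAlgebra.ι K (i, j))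
        ((q - q⁻¹) • (FreeAlgebra.ι K (i, l) * FreeAlgebra.ι K (k, j)))

/-- The quantum matrix algebra `O_q(M_{m,n})`. -/
abbrev QMat (q : K) (m n : ℕ) := RingQuot (QMatRel K q m n)

/-- The generator `X_{ij}` of `O_q(M_{m,n})`. -/
noncomputable def X (q : K) {m n : ℕ} (i : Fin m) (j : Fin n) : QMat K q m n :=
  RingQuot.mkAlgHom K (QMatRel K q m n) (FreeAlgebra.ι K (i, j))

/-- The number of inversions (Coxeter length) of a permutation of `Fin t`. -/
def invCount {t : ℕ} (σ : Equiv.Perm (Fin t)) : ℕ :=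
  ((Finset.univ : Finset (Fin t × Fin t)).filter fun p => p.1 < p.2 ∧ σ p.2 < σ p.1).card

/-- The quantum minor `Σ_σ (-q)^{ℓ(σ)} x_{σ(1)1} ⋯ x_{σ(t)t}` of a `t × t`
matrix of elements of a `K`-algebra. -/
noncomputable def qMinor {A : Type*} [Ring A] [Algebra K A] (q : K) (t : ℕ)
    (x : Fin t → Fin t → A) : A :=
  ∑ σ : Equiv.Perm (Fin t), ((-q) ^ invCount σ) • (List.ofFn fun k => x (σ k) k).prod

/-- The maximal (`m × m`) quantum minor `[J]` of `O_q(M_{m,n})`, with column index set `J`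
(columns taken in increasing order, rows `1,…,m`).  (Defined to be `0` if `J` does not
have exactly `m` elements.) -/
noncomputable def grMinor (q : K) (m : ℕ) {n : ℕ} (J : Finset (Fin n)) : QMat K q m n :=
  if h : J.card = m then
    qMinor K q m (fun i k => X K q i (J.orderEmbOfFin h k)) else 0

/-- The set of maximal quantum minors of `O_q(M_{m,n})`. -/
def grGenSet (q : K) (m n : ℕ) : Set (QMat K q m n) :=
  {a | ∃ J : Finset (Fin n), a = grMinor K q m J}

/-- The quantum grassmannian `O_q(G(m,n))`: the subalgebra of `O_q(M_{m,n})`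
generated by the maximal quantum minors. -/
noncomputable def qGrass (q : K) (m n : ℕ) : Subalgebra K (QMat K q m n) :=
  Algebra.adjoin K (grGenSet K q m n)

/-- The maximal quantum minor `[J]` viewed as an element of the quantum grassmannian. -/
noncomputable def grE (q : K) (m : ℕ) {n : ℕ} (J : Finset (Fin n)) : ↥(qGrass K q m n) :=
  ⟨grMinor K q m J, Algebra.subset_adjoin ⟨J, rfl⟩⟩

/-- Reduction of a natural number modulo `n`, landing in `Fin n` (this encodes the
paper's convention that a column index is read modulo `n`; indices here are 0-based). -/
def fmod (n : ℕ) (hn : 0 < n) (k : ℕ) : Fin n := ⟨k % n, Nat.mod_lt k hn⟩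

/-- The index set `{α, α+1, …, α+m-1}` (read modulo `n`) of a consecutive quantum minor
(0-based indices). -/
def consecSet {n : ℕ} (hn : 0 < n) (m : ℕ) (α : ℕ) : Finset (Fin n) :=
  (Finset.range m).image fun k => fmod n hn (α + k)

end QG
namespace QG

/-- The `2×2` quantum minor `[ab] = X_{1a}X_{2b} − q X_{1b}X_{2a}` of `O_q(M_{2,4})`
(0-based row indices). -/
noncomputable def pl (K : Type*) [Field K] (q : K) (a b : Fin 4) : QMat K q 2 4 :=
  X K q 0 a * X K q 1 b - q • (X K q 0 b * X K q 1 a)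

end QG
namespace QG

/-- The quantum grassmannian `O_q(G(2,4))`: the subalgebra of `O_q(M_{2,4})` generated
by the six `2×2` quantum minors. -/
noncomputable def qGrass24 (K : Type*) [Field K] (q : K) : Subalgebra K (QMat K q 2 4) :=
  Algebra.adjoin K {x | ∃ a b : Fin 4, a < b ∧ x = pl K q a b}

/-- The quantum minor `[ab]` (with `a < b`) as an element of `O_q(G(2,4))`. -/
noncomputable def grGen24 (K : Type*) [Field K] (q : K) (a b : Fin 4) (h : a < b) :
    ↥(qGrass24 K q) :=
  ⟨pl K q a b, Algebra.subset_adjoin ⟨a, b, h, rfl⟩⟩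

section Relations

variable {K : Type*} [Field K] {q : K} {m n : ℕ}

theorem X_mul_X_row (i : Fin m) {j l : Fin n} (h : j < l) :
    X K q i j * X K q i l = q • (X K q i l * X K q i j) := by
  simpa only [X, map_mul, map_smul] using RingQuot.mkAlgHom_rel K (QMatRel.row (q := q) i j l h)

/- These rewrite rules move row `i` to the left of row `k > i`: for the permutation lemma
`X_mul_X_antidiag` that is the direction `simp`'s term order accepts. -/
theorem X_mul_X_antidiag {i k : Fin m} {j l : Fin n} (hik : i < k) (hjl : j < l) :
    X K q k j * X K q i l = X K q i l * X K q k j := by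
  simpa only [X, map_mul] using RingQuot.mkAlgHom_rel K (QMatRel.comm (q := q) k i j l hik hjl)

theorem X_mul_X_diag {i k : Fin m} {j l : Fin n} (hik : i < k) (hjl : j < l) :
    X K q k l * X K q i j = X K q i j * X K q k l - (q - q⁻¹) • (X K q i l * X K q k j) := by
  rw [eq_sub_iff_add_eq, ← eq_sub_iff_add_eq']
  simpa only [X, map_mul, map_sub, map_smul] using
    (RingQuot.mkAlgHom_rel K (QMatRel.qrel (q := q) i k j l hik hjl)).symm

theorem X_mul_X_row_assoc (i : Fin m) {j l : Fin n} (h : j < l) (t : QMat K q m n) :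
    X K q i j * (X K q i l * t) = q • (X K q i l * (X K q i j * t)) := by
  rw [← mul_assoc, X_mul_X_row i h, smul_mul_assoc, mul_assoc]

theorem X_mul_X_antidiag_assoc {i k : Fin m} {j l : Fin n} (hik : i < k) (hjl : j < l)
    (t : QMat K q m n) :
    X K q k j * (X K q i l * t) = X K q i l * (X K q k j * t) := by
  rw [← mul_assoc, X_mul_X_antidiag hik hjl, mul_assoc]

theorem X_mul_X_diag_assoc {i k : Fin m} {j l : Fin n} (hik : i < k) (hjl : j < l)
    (t : QMat K q m n) :
    X K q k l * (X K q i j * t) =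
      X K q i j * (X K q k l * t) - (q - q⁻¹) • (X K q i l * (X K q k j * t)) := by
  rw [← mul_assoc, X_mul_X_diag hik hjl, sub_mul, smul_mul_assoc, mul_assoc, mul_assoc]

end Relations

section Grassmannian

variable {K : Type*} [Field K] {q : K}

theorem pl_zero_one_mul_pl_two_three (hq : q ≠ 0) :
    pl K q 0 1 * pl K q 2 3 = q ^ 2 • (pl K q 2 3 * pl K q 0 1) := by
  simp only [pl, mul_sub, sub_mul, smul_sub, smul_mul_assoc, mul_smul_comm, mul_assoc]
  simp (disch := decide) only [X_mul_X_row, X_mul_X_row_assoc, X_mul_X_antidiag_assoc,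
    X_mul_X_diag_assoc, smul_sub, smul_smul, mul_sub, sub_mul, mul_smul_comm]
  match_scalars <;> field_simp
  ring

theorem pl_one_two_mul_pl_zero_three (hq : q ≠ 0) :
    pl K q 1 2 * pl K q 0 3 = pl K q 0 3 * pl K q 1 2 := by
  simp only [pl, mul_sub, sub_mul, smul_sub, smul_mul_assoc, mul_smul_comm, mul_assoc]
  simp (disch := decide) only [X_mul_X_row, X_mul_X_row_assoc, X_mul_X_antidiag_assoc,
    X_mul_X_diag_assoc, smul_sub, smul_smul, mul_sub, sub_mul, mul_smul_comm]
  match_scalars <;> field_simp <;> ring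

end Grassmannian

section QuantumTorus

variable {K : Type*} [Field K] {q : K} {n : ℕ}

noncomputable def twistedShift (q : K) (w u : Fin n → ℤ) : Module.End K ((Fin n → ℤ) → K) where
  toFun f v := q ^ (w ⬝ᵥ v) * f (v - u)
  map_add' f g := by funext v; simp [mul_add]
  map_smul' c f := by funext v; simp [mul_left_comm]

theorem twistedShift_apply (w u : Fin n → ℤ) (f : (Fin n → ℤ) → K) (v : Fin n → ℤ) :
    twistedShift q w u f v = q ^ (w ⬝ᵥ v) * f (v - u) := rfl

theorem twistedShift_mul (hq : q ≠ 0) (w u w' u' : Fin n → ℤ) :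
    twistedShift q w u * twistedShift q w' u' =
      q ^ (-(w' ⬝ᵥ u)) • twistedShift q (w + w') (u + u') := by
  ext f v
  simp only [Module.End.mul_apply, twistedShift_apply, LinearMap.smul_apply, Pi.smul_apply,
    smul_eq_mul, dotProduct_sub, add_dotProduct, sub_sub, zpow_add₀ hq, zpow_sub₀ hq, zpow_neg]
  field_simp

end QuantumTorus

section TorusRep

variable {K : Type*} [Field K] {q : K}

/- The torus generator `t_i` is `twistedShift q w_i e_i`, where `w_i` records in its entries
`j > i` the exponents `t_i t_j = q ^ (w_i j) t_j t_i` of the quantum affine space on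
`X_{00}, X_{01}, X_{02}, X_{11}, X_{12}, X_{13}` (in this order); the second summand of the
`X_{01}` entry is `t_{02} t_{12}⁻¹ t_{11}`. -/
noncomputable def torusGen (q : K) : Fin 2 → Fin 4 → Module.End K ((Fin 6 → ℤ) → K) :=
  ![![twistedShift q ![0, 1, 1, 0, 0, 0] ![1, 0, 0, 0, 0, 0],
      twistedShift q ![0, 0, 1, 1, 0, 0] ![0, 1, 0, 0, 0, 0] +
        q • twistedShift q ![0, 0, 0, 0, 2, 0] ![0, 0, 1, 1, -1, 0],
      twistedShift q ![0, 0, 0, 0, 1, 0] ![0, 0, 1, 0, 0, 0], 0],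
    ![0, twistedShift q ![0, 0, 0, 0, 1, 1] ![0, 0, 0, 1, 0, 0],
      twistedShift q ![0, 0, 0, 0, 0, 1] ![0, 0, 0, 0, 1, 0],
      twistedShift q ![0, 0, 0, 0, 0, 0] ![0, 0, 0, 0, 0, 1]]]

theorem torusGen_rel (hq : q ≠ 0) {x y : FreeAlgebra K (Fin 2 × Fin 4)}
    (h : QMatRel K q 2 4 x y) :
    FreeAlgebra.lift K (fun p => torusGen q p.1 p.2) x =
      FreeAlgebra.lift K (fun p => torusGen q p.1 p.2) y := by
  rcases h with ⟨i, j, l, h⟩ | ⟨i, k, j, h⟩ | ⟨i, k, j, l, h, h'⟩ | ⟨i, k, j, l, h, h'⟩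
  all_goals fin_cases i <;> fin_cases j
  any_goals fin_cases k
  any_goals fin_cases l
  all_goals first | exact absurd h (by decide) | exact absurd h' (by decide) | skip
  all_goals simp only [FreeAlgebra.lift_ι_apply, map_mul, map_smul, map_sub, torusGen,
    Fin.zero_eta, Fin.mk_one, Fin.reduceFinMk, Matrix.cons_val, zero_mul, mul_zero, smul_zero,
    mul_add, add_mul, sub_mul, smul_add, mul_smul_comm, smul_mul_assoc, twistedShift_mul hq,
    smul_smul, Matrix.cons_dotProduct_cons, Matrix.dotProduct_of_isEmpty, Matrix.cons_add_cons,
    Matrix.empty_add_empty]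
  all_goals norm_num [hq]
  match_scalars
  field_simp

noncomputable def torusRep (hq : q ≠ 0) : QMat K q 2 4 →ₐ[K] Module.End K ((Fin 6 → ℤ) → K) :=
  RingQuot.liftAlgHom K
    ⟨FreeAlgebra.lift K fun p => torusGen q p.1 p.2, fun _ _ => torusGen_rel hq⟩

theorem torusRep_X (hq : q ≠ 0) (i : Fin 2) (j : Fin 4) :
    torusRep hq (X K q i j) = torusGen q i j := by
  rw [torusRep, X, RingQuot.liftAlgHom_mkAlgHom_apply, FreeAlgebra.lift_ι_apply]

theorem torusRep_reversedPlucker_apply (hq : q ≠ 0) :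
    torusRep hq (pl K q 1 2 * pl K q 0 3 - q • (pl K q 1 3 * pl K q 0 2)
        + q ^ 2 • (pl K q 0 1 * pl K q 2 3)) (Pi.single 0 1) ![1, 0, 1, 1, 0, 1] =
      q ^ 2 * (q ^ 2 - 1) := by
  simp only [pl, map_add, map_sub, map_mul, map_smul, torusRep_X, torusGen, Matrix.cons_val,
    zero_mul, mul_zero, smul_zero, mul_add, add_mul, mul_sub, sub_mul, smul_add, smul_sub,
    mul_smul_comm, smul_mul_assoc, twistedShift_mul hq, smul_smul, Matrix.cons_dotProduct_cons,
    Matrix.dotProduct_of_isEmpty, Matrix.cons_add_cons, Matrix.empty_add_empty]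
  simp only [LinearMap.add_apply, LinearMap.sub_apply, LinearMap.smul_apply, Pi.add_apply,
    Pi.sub_apply, Pi.smul_apply, twistedShift_apply, Pi.single_apply, Matrix.cons_sub_cons,
    Matrix.empty_sub_empty, Matrix.cons_eq_zero_iff, Matrix.zero_empty,
    Matrix.cons_dotProduct_cons, Matrix.dotProduct_of_isEmpty]
  norm_num
  field_simp
  ring

theorem torusRep_pl_zero_three_mul_pl_one_two_apply (hq : q ≠ 0) :
    torusRep hq (pl K q 0 3 * pl K q 1 2) (Pi.single 0 1) ![1, 1, 0, 0, 1, 1] = q := by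
  simp only [pl, map_sub, map_mul, map_smul, torusRep_X, torusGen, Matrix.cons_val,
    zero_mul, mul_zero, smul_zero, mul_add, add_mul, mul_sub, sub_mul, smul_add, smul_sub,
    mul_smul_comm, smul_mul_assoc, twistedShift_mul hq, smul_smul, Matrix.cons_dotProduct_cons,
    Matrix.dotProduct_of_isEmpty, Matrix.cons_add_cons, Matrix.empty_add_empty]
  simp only [LinearMap.add_apply, LinearMap.sub_apply, LinearMap.smul_apply, Pi.add_apply,
    Pi.sub_apply, Pi.smul_apply, twistedShift_apply, Pi.single_apply, Matrix.cons_sub_cons,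
    Matrix.empty_sub_empty, Matrix.cons_eq_zero_iff, Matrix.zero_empty,
    Matrix.cons_dotProduct_cons, Matrix.dotProduct_of_isEmpty]
  norm_num
  field_simp

theorem reversedPlucker_ne_zero (hq : q ≠ 0) (hq2 : q ^ 2 ≠ 1) :
    pl K q 1 2 * pl K q 0 3 - q • (pl K q 1 3 * pl K q 0 2)
      + q ^ 2 • (pl K q 0 1 * pl K q 2 3) ≠ 0 := by
  intro h
  have hval := torusRep_reversedPlucker_apply hq
  rw [h, map_zero, LinearMap.zero_apply, Pi.zero_apply, eq_comm] at hval
  exact mul_ne_zero (pow_ne_zero 2 hq) (sub_ne_zero.mpr hq2) hval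

theorem pl_one_two_mul_pl_zero_three_ne (hq : q ≠ 0) (hq2 : q ^ 2 ≠ 1) :
    pl K q 1 2 * pl K q 0 3 ≠ q ^ 2 • (pl K q 0 3 * pl K q 1 2) := by
  rw [pl_one_two_mul_pl_zero_three hq]
  intro h
  have hval := congrArg (fun x => torusRep hq x (Pi.single 0 1) ![1, 1, 0, 0, 1, 1]) h
  simp only [map_smul, LinearMap.smul_apply, Pi.smul_apply, smul_eq_mul,
    torusRep_pl_zero_three_mul_pl_one_two_apply] at hval
  exact hq2 (mul_right_cancel₀ hq (by rw [one_mul]; exact hval.symm))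

end TorusRep

/-- If `q² ≠ 1` then `[23][14] − q[24][13] + q²[12][34] ≠ 0` in
`O_q(G(2,4))` (0-based: `[12][03] − q[13][02] + q²[01][23] ≠ 0`).  Consequently there is
no `K`-algebra automorphism of `O_q(G(2,4))` sending each quantum minor `[ij]` to
`[(i+1)(j+1)]` with indices read modulo `4`. -/
theorem cycling_is_not_an_automorphism
    (K : Type*) [Field K] (q : K) (hq : q ≠ 0) (hq2 : q ^ 2 ≠ 1) :
    pl K q 1 2 * pl K q 0 3 - q • (pl K q 1 3 * pl K q 0 2)
        + q ^ 2 • (pl K q 0 1 * pl K q 2 3) ≠ 0 ∧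
    ¬ ∃ φ : ↥(qGrass24 K q) ≃ₐ[K] ↥(qGrass24 K q),
        ∀ (a b : Fin 4) (h : a < b),
          φ (grGen24 K q a b h) =
            if hb : b = 3 then
              grGen24 K q 0 (a + 1) (by subst hb; revert a; decide)
            else
              grGen24 K q (a + 1) (b + 1) (by revert a b; decide) := by
  refine ⟨reversedPlucker_ne_zero hq hq2, ?_⟩
  rintro ⟨φ, hφ⟩
  have h01 : φ (grGen24 K q 0 1 (by decide)) = grGen24 K q 1 2 (by decide) := hφ 0 1 _
  have h23 : φ (grGen24 K q 2 3 (by decide)) = grGen24 K q 0 3 (by decide) := hφ 2 3 _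
  have hcomm : grGen24 K q 0 1 (by decide) * grGen24 K q 2 3 (by decide) =
      q ^ 2 • (grGen24 K q 2 3 (by decide) * grGen24 K q 0 1 (by decide)) :=
    Subtype.ext (pl_zero_one_mul_pl_two_three hq)
  have hcycled := congrArg φ hcomm
  rw [map_mul, map_smul, map_mul, h01, h23] at hcycled
  exact pl_one_two_mul_pl_zero_three_ne hq hq2 (congrArg Subtype.val hcycled)

end QG
end

section
/- Let [I|J]_x be a quantum minor of the quantum matrix algebra K[x_{ij}] inside A = K[x_{ij}][y^{±1};σ]. Then the image of [I|J]_x under the twist map a ↦ a' of T(A) is the corresponding quantum minor [I|J]_{x'} of the quantum matrix algebra K[x'_{ij}]; i.e., ([I|J]_x)' = [I|J]_{x'}. -/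
open scoped BigOperators

namespace QG

variable (K : Type*) [Field K]

/-- Localisation of a `K`-algebra `A` at the powers of a normal element `u`:
an algebra `B` together with an injective map `A → B` inverting `u`, such that every
element of `B` has the form `a·u^{-k}`. -/
structure NormalLoc (A : Type*) [Ring A] [Algebra K A]
    (B : Type*) [Ring B] [Algebra K B] (u : A) where
  emb : A →ₐ[K] B
  inj : Function.Injective emb
  isUnit : IsUnit (emb u)
  surj : ∀ b : B, ∃ (a : A) (k : ℕ), b = emb a * ↑(isUnit.unit⁻¹ ^ k)

/-- The index set (0-based) of the quantum minor defining the dehomogenisation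
generator `x_{ij}` at the consecutive minor starting at `α`:
`M_α ∪ {~(α+m+j)} ∖ {~(α+(m-1-i))}`. -/
def JxSet {n : ℕ} (hn : 0 < n) (m : ℕ) (α : ℕ) (i : Fin m) (j : Fin (n - m)) :
    Finset (Fin n) :=
  insert (fmod n hn (α + m + j)) ((consecSet hn m α).erase (fmod n hn (α + (m - 1 - i))))

/-- The generator `x_{ij} = [M_α ∪ {~(α+m+j)} ∖ {~(α+(m-1-i))}]·M_α^{-1}` of the
dehomogenisation of the quantum grassmannian at the consecutive minor `M_α`. -/
noncomputable def xElt (q : K) (m n : ℕ) (hn : 0 < n) (α : ℕ)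
    {B : Type*} [Ring B] [Algebra K B]
    (L : NormalLoc K (↥(qGrass K q m n)) B (grE K q m (consecSet hn m α)))
    (i : Fin m) (j : Fin (n - m)) : B :=
  L.emb (grE K q m (JxSet hn m α i j)) * ↑(L.isUnit.unit⁻¹)

/-- `B` is a skew-Laurent extension `R[y^{±1};σ]` of the subalgebra `R`, where `σ` is
conjugation by the unit `y`:  `R` is stable under conjugation by `y` and `B` is free as a
left `R`-module with basis the (integer) powers of `y`. -/
def IsSkewLaurent {B : Type*} [Ring B] [Algebra K B] (R : Subalgebra K B) (y : Bˣ) : Prop :=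
  (∀ r ∈ R, (y : B) * r * ((y⁻¹ : Bˣ) : B) ∈ R) ∧
    ∀ b : B, ∃! f : ℤ →₀ ↥R, b = f.sum fun k r => (r : B) * ((y ^ k : Bˣ) : B)

/-- The quantum minor of a matrix of elements with row index set `R` and column index
set `C` (rows and columns taken in increasing order); `0` if the cardinalities differ. -/
noncomputable def finsetMinor {B : Type*} [Ring B] [Algebra K B] (q : K) {m c : ℕ}
    (x : Fin m → Fin c → B) (R : Finset (Fin m)) (C : Finset (Fin c)) : B :=
  if h : C.card = R.card then
    qMinor K q R.card (fun a b => x (R.orderEmbOfFin rfl a) (C.orderEmbOfFin h b))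
  else 0

/-- The row set `(α+m) − (M_α ∖ I_r)` (0-based) of the image of the maximal minor `[I]`
under the dehomogenisation at `M_α`. -/
def rowSetOf {n : ℕ} (hn : 0 < n) (m : ℕ) (α : ℕ) (I : Finset (Fin n)) : Finset (Fin m) :=
  (Finset.univ.filter fun k : Fin m => fmod n hn (α + k) ∉ I).image Fin.rev

/-- The column set `I_c − (α+m−1)` (0-based) of the image of the maximal minor `[I]`
under the dehomogenisation at `M_α`. -/
def colSetOf {n : ℕ} (hn : 0 < n) (m : ℕ) (α : ℕ) (I : Finset (Fin n)) :
    Finset (Fin (n - m)) :=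
  Finset.univ.filter fun d : Fin (n - m) => fmod n hn (α + m + d) ∈ I

/-- The last index (0-based, corresponding to the paper's index `n`). -/
def lastIdx (n : ℕ) (hn : 0 < n) : Fin n := ⟨n - 1, by omega⟩

/-- The 2-cocycle `c((s_1,…,s_n),(t_1,…,t_n)) = ∏_{j ≠ n} p^{s_n t_j}` on `ℤ^n`. -/
noncomputable def cmap {n : ℕ} (hn : 0 < n) (p : K) :
    (Fin n → ℤ) → (Fin n → ℤ) → K := fun s t =>
  ∏ j ∈ Finset.univ.filter (fun j : Fin n => j ≠ lastIdx n hn),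
    p ^ (s (lastIdx n hn) * t j)

/-- The content `ε(j+m) − ε(m+1−i)` of the dehomogenisation generator `x_{ij}`
(0-based: `ε(m+j) − ε(m-1-i)`). -/
def xContent (m n : ℕ) (i : Fin m) (j : Fin (n - m)) : Fin n → ℤ := fun l =>
  (if (l : ℕ) = m + j then 1 else 0) - (if (l : ℕ) = m - 1 - i then 1 else 0)

/-- The content `ε(1) + ⋯ + ε(m)` of `y` (equivalently, of a consecutive minor `M_1`). -/
def yContent (m n : ℕ) : Fin n → ℤ := fun l => if (l : ℕ) < m then 1 else 0

/-- The content `Σ_{i ∈ I} ε(i)` of a maximal quantum minor `[I]`. -/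
def contentOf {n : ℕ} (I : Finset (Fin n)) : Fin n → ℤ := fun l => if l ∈ I then 1 else 0

/-- A realization of the twist `T(A)` of a `ℤ^n`-graded `K`-algebra `A` by a
2-cocycle `c`: a `K`-algebra `T` together with a `K`-linear isomorphism `τ : A ≃ T`
(the twist map `a ↦ a'`) satisfying `a'b' = c(s,t)·(ab)'` on homogeneous elements. -/
structure CocycleTwist {n : ℕ} (A : Type*) [Ring A] [Algebra K A]
    (𝒜 : (Fin n → ℤ) → Submodule K A) (c : (Fin n → ℤ) → (Fin n → ℤ) → K)
    (T : Type*) [Ring T] [Algebra K T] where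
  τ : A ≃ₗ[K] T
  mul_tw : ∀ (s t : Fin n → ℤ) (a b : A), a ∈ 𝒜 s → b ∈ 𝒜 t →
    τ a * τ b = c s t • τ (a * b)

/-- The image of an index set under the cycle `(1 2 … n)` (0-based). -/
def shiftSet {n : ℕ} (hn : 0 < n) (I : Finset (Fin n)) : Finset (Fin n) :=
  I.image fun a : Fin n => fmod n hn (a.val + 1)

end QG

/-!
The cocycle `c(s, t)` depends only on the last coordinate `s_n` of the left content, and is `1`
when `s_n = 0`. In each monomial `x_{i_1 j_1} ⋯ x_{i_t j_t}` of a quantum minor the columns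
strictly increase, so only the last factor can have column `n - m` (the only one whose content
involves `ε(n)`). Peeling factors off from the left, the twist map is therefore multiplicative on
every monomial, and by linearity it carries the minor to the minor of the twisted generators.
-/

namespace QG

namespace CocycleTwist

variable {K : Type*} [Field K] {n : ℕ} {B : Type*} [Ring B] [Algebra K B]
  {𝒜 : (Fin n → ℤ) → Submodule K B} {c : (Fin n → ℤ) → (Fin n → ℤ) → K}
  {T : Type*} [Ring T] [Algebra K T] (tw : CocycleTwist K B 𝒜 c T)

theorem map_mul_of_cocycle_eq_one {s t : Fin n → ℤ} {a b : B} (ha : a ∈ 𝒜 s) (hb : b ∈ 𝒜 t)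
    (hc : c s t = 1) : tw.τ (a * b) = tw.τ a * tw.τ b := by
  rw [tw.mul_tw s t a b ha hb, hc, one_smul]

theorem map_one [GradedAlgebra 𝒜] (hc : ∀ t, c 0 t = 1) : tw.τ 1 = 1 := by
  have one_mul_map : ∀ b : B, tw.τ 1 * tw.τ b = tw.τ b := by
    refine DirectSum.Decomposition.inductionOn 𝒜 (by simp) (fun b => ?_) (fun a b ha hb => ?_)
    · rw [← tw.map_mul_of_cocycle_eq_one SetLike.GradedOne.one_mem b.2 (hc _), one_mul]
    · rw [map_add, mul_add, ha, hb]
  simpa using one_mul_map (tw.τ.symm 1)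

theorem map_list_ofFn_prod [GradedAlgebra 𝒜] (hc₀ : ∀ t, c 0 t = 1) :
    ∀ {t : ℕ} (a : Fin t → B) (s : Fin t → Fin n → ℤ), (∀ k, a k ∈ 𝒜 (s k)) →
      (∀ k : Fin t, (k : ℕ) + 1 < t → ∀ u, c (s k) u = 1) →
      tw.τ (List.ofFn a).prod = (List.ofFn fun k => tw.τ (a k)).prod
  | 0, _, _, _, _ => by simpa using tw.map_one hc₀
  | 1, a, _, _, _ => by simp
  | t + 2, a, s, ha, hc => by
    rw [List.ofFn_succ (n := t + 1), List.ofFn_succ (n := t + 1), List.prod_cons, List.prod_cons,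
      tw.map_mul_of_cocycle_eq_one (ha 0)
        (SetLike.list_prod_ofFn_mem_graded _ _ fun k => ha k.succ) (hc 0 (by simp) _),
      map_list_ofFn_prod hc₀ (fun k => a k.succ) (fun k => s k.succ) (fun k => ha k.succ)
        fun k hk u => hc k.succ (by simpa using hk) u]

theorem map_qMinor [GradedAlgebra 𝒜] (hc₀ : ∀ t, c 0 t = 1) (q : K) {t : ℕ}
    (x : Fin t → Fin t → B) (s : Fin t → Fin t → Fin n → ℤ) (hx : ∀ a b, x a b ∈ 𝒜 (s a b))
    (hc : ∀ a b : Fin t, (b : ℕ) + 1 < t → ∀ u, c (s a b) u = 1) :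
    tw.τ (qMinor K q t x) = qMinor K q t fun a b => tw.τ (x a b) := by
  simp only [qMinor, map_sum, map_smul]
  refine Finset.sum_congr rfl fun σ _ => congrArg _ ?_
  exact tw.map_list_ofFn_prod hc₀ _ (fun k => s (σ k) k) (fun k => hx _ _)
    fun k hk => hc (σ k) k hk

end CocycleTwist

theorem cmap_eq_one {K : Type*} [Field K] {n : ℕ} (hn : 0 < n) (p : K) {s : Fin n → ℤ}
    (hs : s (lastIdx n hn) = 0) (t : Fin n → ℤ) : cmap K hn p s t = 1 := by
  simp [cmap, hs]

theorem xContent_lastIdx_eq_zero {m n : ℕ} (hn : 0 < n) (i : Fin m) {j : Fin (n - m)}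
    (hj : (j : ℕ) + 1 < n - m) : xContent m n i j (lastIdx n hn) = 0 := by
  have h₁ : n - 1 ≠ m + j := by omega
  have h₂ : n - 1 ≠ m - 1 - i := by omega
  simp [xContent, lastIdx, h₁, h₂]

theorem val_add_one_lt_of_strictMono {t c : ℕ} {f : Fin t → Fin c} (hf : StrictMono f)
    {k : Fin t} (hk : (k : ℕ) + 1 < t) : (f k : ℕ) + 1 < c :=
  Nat.lt_of_lt_of_le (Nat.succ_lt_succ (hf (show k < ⟨k + 1, hk⟩ from Nat.lt_succ_self k)))
    (f _).isLt

/-- The twist map `a ↦ a'` of `T(A)`, for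
`A = K[x_{ij}][y^{±1};σ]` the dehomogenisation of `O_q(G(m,n))` at `M₁`, carries each
quantum minor `[I|J]_x` of the quantum matrix algebra `K[x_{ij}]` to the corresponding
quantum minor `[I|J]_{x'}` of `K[x'_{ij}]`. -/
theorem twist_map_of_quantum_minor
    (K : Type*) [Field K] (q : K) (m n : ℕ) (hmn : m < n)
    (p : K)
    (B : Type*) [Ring B] [Algebra K B]
    (L : NormalLoc K (↥(qGrass K q m n)) B
      (grE K q m (consecSet (show 0 < n by omega) m 0)))
    (𝒜 : (Fin n → ℤ) → Submodule K B) [GradedAlgebra 𝒜]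
    (hx : ∀ (i : Fin m) (j : Fin (n - m)),
      xElt K q m n (show 0 < n by omega) 0 L i j ∈ 𝒜 (xContent m n i j))
    (T : Type*) [Ring T] [Algebra K T]
    (tw : CocycleTwist K B 𝒜 (cmap K (show 0 < n by omega) p) T)
    (R : Finset (Fin m)) (C : Finset (Fin (n - m))) :
    tw.τ (finsetMinor K q (xElt K q m n (show 0 < n by omega) 0 L) R C) =
      finsetMinor K q (fun i j => tw.τ (xElt K q m n (show 0 < n by omega) 0 L i j))
        R C := by
  have hn : 0 < n := by omega
  unfold finsetMinor
  split_ifs with hRC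
  · refine tw.map_qMinor (fun t => cmap_eq_one hn p rfl t) q _
      (fun a b => xContent m n _ (C.orderEmbOfFin hRC b)) (fun a b => hx _ _) ?_
    exact fun a b hb => cmap_eq_one hn p <| xContent_lastIdx_eq_zero hn _ <|
      val_add_one_lt_of_strictMono (C.orderEmbOfFin hRC).strictMono hb
  · exact map_zero tw.τ

end QG
end
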